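/- Let R be a (possibly noncommutative) ring, let K₁, K₂, m ≥ 1 and X ≥ 0 be integers, and let q_A, q_B be the column-ordered secure encoding polynomials over R built from elements A_{j,k}, B_{j,k}, R_i, T_i. Set k = (K₂+1)(K₁m+X) − 1 − K₁(m−1). Then for every 1 ≤ j ≤ K₁ and 1 ≤ k' ≤ K₂, the coefficient of x^{(m−1)K₁+(j−1)+(k'−1)(K₁m+X)} in the remainder of q_A(x)·q_B(x) upon division by x^k − 1 equals Σ_{i=1}^{m} A_{j,i}·B_{i,k'}. -/

import Mathlib

/-!
Put `S = K₁ * m + Xs` and read exponents in base `S`. The exponent of `A j' i * B i' l` in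
`colA * colB` is `(i * K₁ + j' + (m - 1 - i') * K₁) + l * S` with low part below `2 * S`,
while the target `(m - 1) * K₁ + j + k' * S` has low digit below `S`; comparing digits
forces `l = k'`, and reading the low part in base `K₁` then forces `j' = j` and `i = i'`.
The random terms never reach the target: the `R`-terms paired with `B` miss its low digit and every
`T`-term lies above it. Finally `deg (colA * colB) ≤ (K₂ + 1) * S - 2 < k + n` for the target
index `n < k`, so the quotient by `X ^ k - 1` has degree below `n`, and the reduction leaves
the `n`-th coefficient untouched.
-/

open Polynomial Finset

/-- The column-ordered secure encoding polynomial of `A` (Section IV-A-2), with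
0-based indices; `Xs` is the security parameter. -/
noncomputable def colA {R : Type*} [Ring R] (K₁ m Xs : ℕ)
    (A : Fin K₁ → Fin m → R) (Rn : Fin Xs → R) : R[X] :=
  (∑ j : Fin K₁, ∑ k : Fin m, monomial (k.val * K₁ + j.val) (A j k))
    + ∑ i : Fin Xs, monomial (K₁ * m + i.val) (Rn i)

/-- The column-ordered secure encoding polynomial of `B` (Section IV-A-2), with
0-based indices. -/
noncomputable def colB {R : Type*} [Ring R] (K₁ K₂ m Xs : ℕ)
    (B : Fin m → Fin K₂ → R) (T : Fin Xs → R) : R[X] :=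
  (∑ j : Fin m, ∑ k : Fin K₂, monomial ((m - 1 - j.val) * K₁ + k.val * (K₁ * m + Xs)) (B j k))
    + ∑ i : Fin Xs, monomial ((K₂ - 1) * (K₁ * m + Xs) + K₁ * m + i.val) (T i)

theorem Nat.add_mul_eq_add_mul_iff_of_lt {S a b u v : ℕ} (ha : a < S) (hb : b < S) :
    a + u * S = b + v * S ↔ a = b ∧ u = v := by
  refine ⟨fun h => ?_, fun ⟨hab, huv⟩ => hab ▸ huv ▸ rfl⟩
  have hS : 0 < S := by omega
  obtain ⟨hu, ha'⟩ :=
    (Nat.div_mod_unique (a := a + u * S) (d := u) (c := a) hS).2 ⟨by ring, ha⟩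
  obtain ⟨hv, hb'⟩ :=
    (Nat.div_mod_unique (a := b + v * S) (d := v) (c := b) hS).2 ⟨by ring, hb⟩
  rw [h] at hu ha'
  exact ⟨ha'.symm.trans hb', hu.symm.trans hv⟩

theorem Nat.eq_and_eq_of_add_mul_eq_add_mul {S a b u v : ℕ} (hb : b < S) (ha : a < b + S)
    (h : a + u * S = b + v * S) : a = b ∧ u = v := by
  rcases lt_or_ge a S with haS | haS
  · exact (Nat.add_mul_eq_add_mul_iff_of_lt haS hb).1 h
  · have h' : (a - S) + (u + 1) * S = b + v * S := by rw [add_mul, one_mul]; omega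
    have hab := ((Nat.add_mul_eq_add_mul_iff_of_lt (by omega) hb).1 h').1
    omega

theorem coeff_modByMonic_X_pow_sub_C {R : Type*} [Ring R] {p : R[X]} {k n : ℕ} (a : R) (hn : n < k)
    (hp : p.natDegree < k + n) : (p %ₘ (X ^ k - C a)).coeff n = p.coeff n := by
  nontriviality R
  have hmonic : (X ^ k - C a).Monic := monic_X_pow_sub_C a (by omega)
  by_cases hpk : p.natDegree < k
  · rw [(modByMonic_eq_self_iff hmonic).2 (degree_lt_degree (by rwa [natDegree_X_pow_sub_C]))]
  have hquot : (p /ₘ (X ^ k - C a)).coeff n = 0 := by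
    refine coeff_eq_zero_of_natDegree_lt ?_
    rw [natDegree_divByMonic _ hmonic, natDegree_X_pow_sub_C]
    omega
  rw [modByMonic_eq_sub_mul_div, coeff_sub, sub_mul, coeff_sub, coeff_X_pow_mul',
    if_neg (by omega), coeff_C_mul, hquot]
  simp

section Exponents

variable {K₁ m Xs : ℕ}

theorem Nat.sub_one_mul_add_self (hm : 1 ≤ m) : (m - 1) * K₁ + K₁ = K₁ * m := by
  rw [← Nat.succ_mul, Nat.succ_eq_add_one, Nat.sub_add_cancel hm, mul_comm]

theorem exponent_A_B_eq_iff {i i' j j' l l' : ℕ} (hi : i < m) (hi' : i' < m) (hj : j < K₁)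
    (hj' : j' < K₁) :
    i * K₁ + j' + ((m - 1 - i') * K₁ + l * (K₁ * m + Xs))
        = (m - 1) * K₁ + j + l' * (K₁ * m + Xs) ↔ i = i' ∧ j' = j ∧ l = l' := by
  have hmK := Nat.sub_one_mul_add_self (K₁ := K₁) (by omega : 1 ≤ m)
  have hiK : i * K₁ ≤ (m - 1) * K₁ := Nat.mul_le_mul_right _ (by omega)
  have hi'K : (m - 1 - i') * K₁ ≤ (m - 1) * K₁ := Nat.mul_le_mul_right _ (by omega)
  constructor
  · intro h
    have h' : (i * K₁ + j' + (m - 1 - i') * K₁) + l * (K₁ * m + Xs)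
        = ((m - 1) * K₁ + j) + l' * (K₁ * m + Xs) := by omega
    obtain ⟨hlow, hl⟩ := Nat.eq_and_eq_of_add_mul_eq_add_mul (by omega) (by omega) h'
    have hdigits : j' + (i + (m - 1 - i')) * K₁ = j + (m - 1) * K₁ := by rw [add_mul]; omega
    obtain ⟨hjj, hii⟩ := (Nat.add_mul_eq_add_mul_iff_of_lt hj' hj).1 hdigits
    omega
  · rintro ⟨rfl, rfl, rfl⟩
    have hsum : i * K₁ + (m - 1 - i) * K₁ = (m - 1) * K₁ := by rw [← add_mul]; congr 1; omega
    omega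

theorem exponent_R_B_ne {x i' j l l' : ℕ} (hx : x < Xs) (hi' : i' < m) (hj : j < K₁) :
    K₁ * m + x + ((m - 1 - i') * K₁ + l * (K₁ * m + Xs))
      ≠ (m - 1) * K₁ + j + l' * (K₁ * m + Xs) := by
  have hmK := Nat.sub_one_mul_add_self (K₁ := K₁) (by omega : 1 ≤ m)
  have hi'K : (m - 1 - i') * K₁ ≤ (m - 1) * K₁ := Nat.mul_le_mul_right _ (by omega)
  intro h
  have h' : (K₁ * m + x + (m - 1 - i') * K₁) + l * (K₁ * m + Xs)
      = ((m - 1) * K₁ + j) + l' * (K₁ * m + Xs) := by omega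
  have hdigit := (Nat.eq_and_eq_of_add_mul_eq_add_mul (by omega) (by omega) h').1
  omega

theorem exponent_T_ne {K₂ a x j k' : ℕ} (hm : 1 ≤ m) (hj : j < K₁) (hk' : k' < K₂) :
    a + ((K₂ - 1) * (K₁ * m + Xs) + K₁ * m + x)
      ≠ (m - 1) * K₁ + j + k' * (K₁ * m + Xs) := by
  have hmK := Nat.sub_one_mul_add_self (K₁ := K₁) hm
  have hk'S : k' * (K₁ * m + Xs) ≤ (K₂ - 1) * (K₁ * m + Xs) :=
    Nat.mul_le_mul_right _ (by omega)
  omega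

end Exponents

section Encoding

variable {R : Type*} [Ring R] {K₁ K₂ m Xs : ℕ}

theorem natDegree_colA_le (A : Fin K₁ → Fin m → R) (Rn : Fin Xs → R) :
    (colA K₁ m Xs A Rn).natDegree ≤ K₁ * m + Xs - 1 := by
  refine natDegree_add_le_of_degree_le
    (natDegree_sum_le_of_forall_le _ _ fun j _ => natDegree_sum_le_of_forall_le _ _ fun k _ =>
      (natDegree_monomial_le _).trans ?_)
    (natDegree_sum_le_of_forall_le _ _ fun i _ => (natDegree_monomial_le _).trans ?_)
  · have hmK := Nat.sub_one_mul_add_self (K₁ := K₁) (Nat.one_le_of_lt k.is_lt)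
    have hkK : k.val * K₁ ≤ (m - 1) * K₁ :=
      Nat.mul_le_mul_right _ (Nat.le_sub_one_of_lt k.is_lt)
    have hj := j.is_lt
    omega
  · have hi := i.is_lt
    omega

theorem natDegree_colB_le (hK₁ : 1 ≤ K₁) (hK₂ : 1 ≤ K₂) (B : Fin m → Fin K₂ → R)
    (T : Fin Xs → R) :
    (colB K₁ K₂ m Xs B T).natDegree ≤ K₂ * (K₁ * m + Xs) - 1 := by
  have hK₂S : (K₂ - 1) * (K₁ * m + Xs) + (K₁ * m + Xs) = K₂ * (K₁ * m + Xs) := by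
    rw [Nat.sub_one_mul_add_self hK₂, mul_comm]
  refine natDegree_add_le_of_degree_le
    (natDegree_sum_le_of_forall_le _ _ fun i _ => natDegree_sum_le_of_forall_le _ _ fun l _ =>
      (natDegree_monomial_le _).trans ?_)
    (natDegree_sum_le_of_forall_le _ _ fun x _ => (natDegree_monomial_le _).trans ?_)
  · have hmK := Nat.sub_one_mul_add_self (K₁ := K₁) (Nat.one_le_of_lt i.is_lt)
    have hiK : (m - 1 - i.val) * K₁ ≤ (m - 1) * K₁ := Nat.mul_le_mul_right _ (by omega)
    have hlS : l.val * (K₁ * m + Xs) ≤ (K₂ - 1) * (K₁ * m + Xs) :=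
      Nat.mul_le_mul_right _ (Nat.le_sub_one_of_lt l.is_lt)
    omega
  · have hx := x.is_lt
    omega

theorem coeff_colA_mul_colB (hm : 1 ≤ m) (A : Fin K₁ → Fin m → R) (B : Fin m → Fin K₂ → R)
    (Rn : Fin Xs → R) (T : Fin Xs → R) (j : Fin K₁) (k' : Fin K₂) :
    (colA K₁ m Xs A Rn * colB K₁ K₂ m Xs B T).coeff
        ((m - 1) * K₁ + j.val + k'.val * (K₁ * m + Xs))
      = ∑ i : Fin m, A j i * B i k' := by
  simp only [colA, colB, add_mul (R := R[X]), mul_add (R := R[X]), sum_mul, mul_sum,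
    monomial_mul_monomial, coeff_add, finsetSum_coeff, coeff_monomial]
  simp only [exponent_A_B_eq_iff, exponent_R_B_ne, exponent_T_ne hm, Fin.is_lt]
  simp [Fin.val_inj, ite_and, Finset.sum_ite_eq']

end Encoding

/-- Theorem 3: reducing the product of the column-ordered secure encoding polynomials
modulo `x^k - 1` with `k = (K₂+1)(K₁m+Xs) - 1 - K₁(m-1)` preserves all the desired
block coefficients `C_{j,k'} = Σ_i A_{j,i} B_{i,k'}`. -/
theorem stmt_8 {R : Type*} [Ring R] (K₁ K₂ m Xs : ℕ)
    (hK₁ : 1 ≤ K₁) (hK₂ : 1 ≤ K₂) (hm : 1 ≤ m)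
    (A : Fin K₁ → Fin m → R) (B : Fin m → Fin K₂ → R)
    (Rn : Fin Xs → R) (T : Fin Xs → R)
    (k : ℕ) (hk : k = (K₂ + 1) * (K₁ * m + Xs) - 1 - K₁ * (m - 1))
    (j : Fin K₁) (k' : Fin K₂) :
    ((colA K₁ m Xs A Rn * colB K₁ K₂ m Xs B T) %ₘ (X ^ k - 1)).coeff
        ((m - 1) * K₁ + j.val + k'.val * (K₁ * m + Xs))
      = ∑ i : Fin m, A j i * B i k' := by
  have hmK := Nat.sub_one_mul_add_self (K₁ := K₁) hm
  have hk'S : k'.val * (K₁ * m + Xs) + (K₁ * m + Xs) ≤ K₂ * (K₁ * m + Xs) := by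
    rw [← add_one_mul]; exact Nat.mul_le_mul_right _ k'.is_lt
  have hkS : k = K₂ * (K₁ * m + Xs) + Xs + K₁ - 1 := by
    rw [hk, mul_comm K₁ (m - 1), add_one_mul]; omega
  have hdeg := natDegree_mul_le.trans
    (add_le_add (natDegree_colA_le A Rn) (natDegree_colB_le (K₁ := K₁) hK₁ hK₂ B T))
  have hj := j.is_lt
  rw [← C_1, coeff_modByMonic_X_pow_sub_C 1 (by omega) (by omega), coeff_colA_mul_colB hm]
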